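/- arXiv:2208.06788 — 5 statements merged into one kernel-verified Lean document; each statement's English description precedes it below -/
import Mathlib

section
/- Suppose f ∈ C²([t0,t1)) (with t1 > t0) solves the ODE with the given initial data f(t0) = f̊ > 0. Then f(t) > 0 for all t ∈ [t0,t1). -/
/-!
Since `f(t₀) > 0` and `f'(t₀) > 0`, it suffices to show that `f'` never vanishes: then `f` is
increasing and stays above `f(t₀)`. At a first zero `s` of `f'`, `f` has increased up to `s`, so
`f(s) > 0` and the equation reduces to `f''(s) = (b/s²) f(s) (1 + f(s)) > 0`; but `f'` decreases
from positive values to `0` at `s`, so `f''(s) ≤ 0`.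
-/

open Set Filter Topology

theorem HasDerivAt.nonpos_of_eventually_le_left {g : ℝ → ℝ} {d s : ℝ} (hd : HasDerivAt g d s)
    (hle : ∀ᶠ t in 𝓝[<] s, g s ≤ g t) : d ≤ 0 := by
  have hslope : Tendsto (slope g s) (𝓝[<] s) (𝓝 d) :=
    (hasDerivWithinAt_iff_tendsto_slope' (s := Iio s) (lt_irrefl s)).mp hd.hasDerivWithinAt
  refine le_of_tendsto hslope ?_
  filter_upwards [hle, self_mem_nhdsWithin] with t hgt (hts : t < s)
  rw [slope_def_field]
  exact div_nonpos_of_nonneg_of_nonpos (sub_nonneg.mpr hgt) (sub_nonpos.mpr hts.le)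

theorem forall_pos_of_ne_zero_at_first_zero {g : ℝ → ℝ} {a b : ℝ}
    (hg : ContinuousOn g (Ico a b)) (ha : 0 < g a)
    (hfirst : ∀ s ∈ Ioo a b, (∀ t ∈ Ico a s, 0 < g t) → g s ≠ 0) :
    ∀ t ∈ Ico a b, 0 < g t := by
  by_contra! ⟨w, hw, hgw⟩
  have hsub : Icc a w ⊆ Ico a b := Icc_subset_Ico_right hw.2
  set T := Icc a w ∩ g ⁻¹' Iic 0
  have hTbdd : BddBelow T := ⟨a, fun x hx => hx.1.1⟩
  have hsT : sInf T ∈ T :=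
    ((hg.mono hsub).preimage_isClosed_of_isClosed isClosed_Icc isClosed_Iic).csInf_mem
      ⟨w, ⟨hw.1, le_rfl⟩, hgw⟩ hTbdd
  set s := sInf T
  have hbefore : ∀ t ∈ Ico a s, 0 < g t := fun t ht => by
    by_contra! hgt
    exact ht.2.not_ge (csInf_le hTbdd ⟨⟨ht.1, ht.2.le.trans hsT.1.2⟩, hgt⟩)
  have has : a < s := hsT.1.1.lt_of_ne fun h => (h ▸ ha).not_ge hsT.2
  have hgs : 0 ≤ g s := by
    have hcont : ContinuousWithinAt g (Ico a s) s :=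
      (hg s (hsub hsT.1)).mono (Ico_subset_Ico_right (hsub hsT.1).2.le)
    have : (𝓝[Ico a s] s).NeBot := by
      rw [← mem_closure_iff_nhdsWithin_neBot, closure_Ico has.ne]
      exact right_mem_Icc.mpr has.le
    exact ge_of_tendsto hcont
      (eventually_mem_nhdsWithin.mono fun t ht => (hbefore t ht).le)
  exact hfirst s ⟨has, (hsub hsT.1).2⟩ hbefore (le_antisymm hsT.2 hgs)

theorem le_of_deriv_pos_on_Ioo {f : ℝ → ℝ} {a b : ℝ} (hf : ContinuousOn f (Icc a b))
    (hf' : ∀ x ∈ Ioo a b, 0 < deriv f x) (hab : a ≤ b) : f a ≤ f b := by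
  rcases hab.eq_or_lt with rfl | hab
  · exact le_rfl
  refine (strictMonoOn_of_deriv_pos (convex_Icc a b) hf ?_ (left_mem_Icc.mpr hab.le)
    (right_mem_Icc.mpr hab.le) hab).le
  simpa only [interior_Icc] using hf'

theorem ContDiffOn.continuousOn_deriv_Ico {f : ℝ → ℝ} {a b : ℝ}
    (hf : ContDiffOn ℝ 1 f (Ico a b)) (ha : DifferentiableAt ℝ f a) :
    ContinuousOn (deriv f) (Ico a b) := by
  refine (hf.continuousOn_derivWithin (uniqueDiffOn_Ico a b) le_rfl).congr fun t ht => ?_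
  rcases ht.1.eq_or_lt with rfl | hat
  · exact (ha.derivWithin (uniqueDiffOn_Ico _ b _ ht)).symm
  · exact (derivWithin_of_mem_nhds (Ico_mem_nhds hat ht.2)).symm

theorem deriv_deriv_pos_of_deriv_eq_zero {f : ℝ → ℝ} {a b c s : ℝ} (hb : 0 < b) (hs : 0 < s)
    (hfs : 0 < f s)
    (hode : deriv (deriv f) s + (a / s) * deriv f s
        - (b / s ^ 2) * f s * (1 + f s)
        - (c / (1 + f s)) * (deriv f s) ^ 2 = 0)
    (hzero : deriv f s = 0) : 0 < deriv (deriv f) s := by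
  have hf''_eq : deriv (deriv f) s = b / s ^ 2 * f s * (1 + f s) := by
    rw [hzero] at hode
    linear_combination hode
  rw [hf''_eq]
  positivity

theorem stmt_1_general
    (t0 t1 a b c fi fi0 : ℝ) (f : ℝ → ℝ)
    (ht0 : 0 < t0)
    (hb : 0 < b)
    (hfi : 0 < fi) (hfi0 : 0 < fi0)
    (hreg : ContDiffOn ℝ 2 f (Set.Ico t0 t1))
    (hode : ∀ t ∈ Set.Ico t0 t1,
      deriv (deriv f) t + (a / t) * deriv f t
        - (b / t ^ 2) * f t * (1 + f t)
        - (c / (1 + f t)) * (deriv f t) ^ 2 = 0)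
    (hft0 : f t0 = fi) (hft0' : deriv f t0 = fi0) :
    ∀ t ∈ Set.Ico t0 t1, 0 < f t := by
  have hf_ge : ∀ t ∈ Ico t0 t1, (∀ x ∈ Ioo t0 t, 0 < deriv f x) → fi ≤ f t := fun t ht hf' =>
    hft0 ▸ le_of_deriv_pos_on_Ioo (hreg.continuousOn.mono (Icc_subset_Ico_right ht.2)) hf' ht.1
  have hf'_pos : ∀ t ∈ Ico t0 t1, 0 < deriv f t := by
    -- `deriv f t0 ≠ 0` is not the junk value, so `f` is differentiable at the endpoint `t0`.
    refine forall_pos_of_ne_zero_at_first_zero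
      ((hreg.of_le one_le_two).continuousOn_deriv_Ico
        (differentiableAt_of_deriv_ne_zero (hft0' ▸ hfi0.ne')))
      (hft0' ▸ hfi0) fun s hs hbefore hzero => ?_
    have hfs : 0 < f s := hfi.trans_le
      (hf_ge s (Ioo_subset_Ico_self hs) fun x hx => hbefore x (Ioo_subset_Ico_self hx))
    have hdiff : DifferentiableAt ℝ (deriv f) s :=
      (((hreg.mono Ioo_subset_Ico_self).deriv_of_isOpen isOpen_Ioo (by norm_num)).differentiableOn
        one_ne_zero).differentiableAt (isOpen_Ioo.mem_nhds hs)
    have hf''_nonpos : deriv (deriv f) s ≤ 0 :=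
      hdiff.hasDerivAt.nonpos_of_eventually_le_left <|
        Filter.mem_of_superset (Ioo_mem_nhdsLT hs.1) fun t ht =>
          hzero ▸ (hbefore t (Ioo_subset_Ico_self ht)).le
    exact hf''_nonpos.not_gt <| deriv_deriv_pos_of_deriv_eq_zero hb (ht0.trans hs.1) hfs
      (hode s (Ioo_subset_Ico_self hs)) hzero
  exact fun t ht => hfi.trans_le (hf_ge t ht fun x hx => hf'_pos x ⟨hx.1.le, hx.2.trans ht.2⟩)

/-- If `f ∈ C²([t0,t1))` solves the ODE
`f'' + (a/t) f' - (b/t²) f (1+f) - (c/(1+f)) (f')² = 0` with initial data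
`f(t0) = f̊ > 0`, `f'(t0) = f̊0 > 0`, then `f(t) > 0` for all `t ∈ [t0,t1)`. -/
theorem stmt_1
    (t0 t1 a b c fi fi0 : ℝ) (f : ℝ → ℝ)
    (ht0 : 0 < t0) (ht01 : t0 < t1)
    (ha : 1 < a) (hb : 0 < b) (hc : 1 < c) (hc' : c < 3 / 2)
    (hfi : 0 < fi) (hfi0 : 0 < fi0)
    (hreg : ContDiffOn ℝ 2 f (Set.Ico t0 t1))
    (hode : ∀ t ∈ Set.Ico t0 t1,
      deriv (deriv f) t + (a / t) * deriv f t
        - (b / t ^ 2) * f t * (1 + f t)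
        - (c / (1 + f t)) * (deriv f t) ^ 2 = 0)
    (hft0 : f t0 = fi) (hft0' : deriv f t0 = fi0) :
    ∀ t ∈ Set.Ico t0 t1, 0 < f t :=
  stmt_1_general t0 t1 a b c fi fi0 f ht0 hb hfi hfi0 hreg hode hft0 hft0'
end

section
/- Suppose f ∈ C²([t0,t1)) (with t1 > t0) solves the ODE with the given initial data. Then for every t ∈ [t0,t1) the function g satisfies g(t) = (1 + b·B·∫_{t0}^t s^(a−2)·f(s)·(1+f(s))^(1−c) ds)^(−A/b); moreover g(t) ∈ (0,1] for all t ∈ [t0,t1) and g(t0) = 1. -/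
/-!
Put `u(t) = B t^a f'(t) (1 + f(t))^(-c)` (`flux`). The ODE says exactly that
`u' = b B t^(a-2) f (1 + f)^(1-c)`, and `B` is chosen so that `u(t0) = 1`; hence
`u(t) = 1 + b B ∫ …`. Moreover `u'/u = b f (1 + f) / (t² f')`, so the integral in the exponent
of `g` is `(log u)/b`, i.e. `g = u^(-A/b)`, which lies in `(0, 1]` because `u ≥ 1`.

All of this needs `f' > 0` on `[t0, t1)`. At a first zero `q` of `f'`, the function `f` has
increased on `[t0, q]`, so the ODE gives `f''(q) = b f(q) (1 + f(q)) / q² > 0`, which forces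
`f' < 0` just before `q`.
-/

open Real Set MeasureTheory intervalIntegral Filter Topology

theorem pos_of_forall_not_first_zero {h : ℝ → ℝ} {a b : ℝ} (hcont : ContinuousOn h (Ico a b))
    (ha : 0 < h a) (hfirst : ∀ q ∈ Ioo a b, h q = 0 → ¬ ∀ s ∈ Ico a q, 0 < h s) :
    ∀ t ∈ Ico a b, 0 < h t := by
  by_contra! ⟨t, ht, hnonpos⟩
  have hsub : Icc a t ⊆ Ico a b := Icc_subset_Ico_right ht.2
  set Z := Icc a t ∩ h ⁻¹' Iic 0
  have hZbdd : BddBelow Z := ⟨a, fun s hs => hs.1.1⟩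
  have hqZ : sInf Z ∈ Z :=
    ((hcont.mono hsub).preimage_isClosed_of_isClosed isClosed_Icc isClosed_Iic).csInf_mem
      ⟨t, ⟨ht.1, le_rfl⟩, hnonpos⟩ hZbdd
  set q := sInf Z
  have hbefore : ∀ s ∈ Ico a q, 0 < h s := fun s hs => by
    by_contra! hs'
    exact hs.2.not_ge (csInf_le hZbdd ⟨⟨hs.1, hs.2.le.trans hqZ.1.2⟩, hs'⟩)
  have haq : a < q := hqZ.1.1.lt_of_ne fun haq => (haq ▸ hqZ.2 : h a ≤ 0).not_gt ha
  have hq : q ∈ Ioo a b := ⟨haq, hqZ.1.2.trans_lt ht.2⟩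
  have hzero : h q = 0 := by
    refine le_antisymm hqZ.2 (ge_of_tendsto (f := h) (x := 𝓝[<] q) ?_ ?_)
    · exact (hcont.continuousAt (Ico_mem_nhds haq hq.2)).tendsto.mono_left nhdsWithin_le_nhds
    · filter_upwards [Ioo_mem_nhdsLT haq] with s hs using (hbefore s (Ioo_subset_Ico_self hs)).le
  exact hfirst q hq hzero hbefore

theorem hasDerivAt_of_contDiffOn_Ico {f : ℝ → ℝ} {t0 t1 : ℝ} (hf : ContDiffOn ℝ 1 f (Ico t0 t1))
    (h0 : DifferentiableAt ℝ f t0) {x : ℝ} (hx : x ∈ Ico t0 t1) : HasDerivAt f (deriv f x) x := by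
  rcases hx.1.eq_or_lt with rfl | hlt
  · exact h0.hasDerivAt
  · exact ((hf.contDiffAt (Ico_mem_nhds hlt hx.2)).differentiableAt one_ne_zero).hasDerivAt

theorem continuousOn_deriv_of_contDiffOn_Ico {f : ℝ → ℝ} {t0 t1 : ℝ}
    (hf : ContDiffOn ℝ 1 f (Ico t0 t1)) (h0 : DifferentiableAt ℝ f t0) :
    ContinuousOn (deriv f) (Ico t0 t1) :=
  (hf.continuousOn_derivWithin (uniqueDiffOn_Ico t0 t1) le_rfl).congr fun x hx =>
    ((hasDerivAt_of_contDiffOn_Ico hf h0 hx).hasDerivWithinAt.derivWithin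
      (uniqueDiffOn_Ico t0 t1 x hx)).symm

theorem integral_div_eq_log_sub_log {u u' : ℝ → ℝ} {a b : ℝ} (hab : a ≤ b)
    (hu : ContinuousOn u (Icc a b)) (hpos : ∀ x ∈ Icc a b, 0 < u x)
    (hderiv : ∀ x ∈ Ioo a b, HasDerivAt u (u' x) x)
    (hint : IntervalIntegrable (fun x => u' x / u x) volume a b) :
    ∫ x in a..b, u' x / u x = log (u b) - log (u a) :=
  integral_eq_sub_of_hasDerivAt_of_le hab (hu.log fun x hx => (hpos x hx).ne')
    (fun x hx => (hderiv x hx).log (hpos x (Ioo_subset_Icc_self hx)).ne') hint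

theorem apply_le_of_deriv_nonneg {f : ℝ → ℝ} {t0 t1 : ℝ} (hf : ContDiffOn ℝ 1 f (Ico t0 t1))
    (hdf : ∀ t ∈ Ico t0 t1, 0 ≤ deriv f t) {t : ℝ} (ht : t ∈ Ico t0 t1) : f t0 ≤ f t :=
  monotoneOn_of_deriv_nonneg (convex_Ico t0 t1) hf.continuousOn
    ((hf.differentiableOn one_ne_zero).mono interior_subset)
    (fun x hx => hdf x (interior_subset hx)) (left_mem_Ico.2 (ht.1.trans_lt ht.2)) ht ht.1

theorem integral_rpow_mul_mul_one_add_rpow_nonneg {f : ℝ → ℝ} {p q t0 t : ℝ} (ht0 : 0 < t0)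
    (ht : t0 ≤ t) (hf : ∀ s ∈ Icc t0 t, 0 ≤ f s) :
    0 ≤ ∫ s in t0..t, s ^ p * f s * (1 + f s) ^ q :=
  integral_nonneg ht fun s hs => by
    have := hf s hs
    have := rpow_pos_of_pos (ht0.trans_le hs.1) p
    have := rpow_pos_of_pos (show 0 < 1 + f s by linarith) q
    positivity

def SolvesODE (a b c : ℝ) (f : ℝ → ℝ) (s : Set ℝ) : Prop :=
  ∀ t ∈ s, deriv (deriv f) t + (a / t) * deriv f t
    - (b / t ^ 2) * f t * (1 + f t) - (c / (1 + f t)) * (deriv f t) ^ 2 = 0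

noncomputable def flux (B a c : ℝ) (f : ℝ → ℝ) (t : ℝ) : ℝ :=
  B * t ^ a * deriv f t * (1 + f t) ^ (-c)

namespace SolvesODE

theorem mono {a b c : ℝ} {f : ℝ → ℝ} {s s' : Set ℝ} (h : SolvesODE a b c f s) (hs : s' ⊆ s) :
    SolvesODE a b c f s' :=
  fun t ht => h t (hs ht)

variable {a b c t0 t1 : ℝ} {f : ℝ → ℝ}

theorem deriv_pos (hode : SolvesODE a b c f (Ico t0 t1)) (ht0 : 0 < t0) (hb : 0 < b)
    (hf0 : 0 < f t0) (hdf0 : 0 < deriv f t0) (hreg : ContDiffOn ℝ 1 f (Ico t0 t1)) :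
    ∀ t ∈ Ico t0 t1, 0 < deriv f t := by
  refine pos_of_forall_not_first_zero (continuousOn_deriv_of_contDiffOn_Ico hreg
    (differentiableAt_of_deriv_ne_zero hdf0.ne')) hdf0 fun q hq hzero hbefore => ?_
  have hmono : StrictMonoOn f (Icc t0 q) :=
    strictMonoOn_of_deriv_pos (convex_Icc t0 q)
      (hreg.continuousOn.mono (Icc_subset_Ico_right hq.2)) fun x hx =>
        hbefore x (Ioo_subset_Ico_self (interior_Icc (a := t0) ▸ hx))
  have hfq : 0 < f q := hf0.trans (hmono (left_mem_Icc.2 hq.1.le) (right_mem_Icc.2 hq.1.le) hq.1)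
  have hf'' : 0 < deriv (deriv f) q := by
    have h := hode q (Ioo_subset_Ico_self hq)
    rw [hzero] at h
    have hq0 : 0 < q := ht0.trans hq.1
    nlinarith [show 0 < b / q ^ 2 * f q * (1 + f q) by positivity]
  have hneg : ∀ᶠ s in 𝓝[<] q, deriv f s < 0 :=
    deriv_neg_left_of_sign_deriv
      (nhdsWithin_le_nhds (eventually_nhdsWithin_sign_eq_of_deriv_pos hf'' hzero))
  obtain ⟨s, hs, hsq⟩ := (hneg.and (Ioo_mem_nhdsLT hq.1)).exists
  exact hs.not_gt (hbefore s (Ioo_subset_Ico_self hsq))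

end SolvesODE

theorem hasDerivAt_flux {B a b c x : ℝ} {f : ℝ → ℝ} (hx : 0 < x) (hfx : 0 < 1 + f x)
    (hf : HasDerivAt f (deriv f x) x) (hf' : HasDerivAt (deriv f) (deriv (deriv f) x) x)
    (hode : SolvesODE a b c f {x}) :
    HasDerivAt (flux B a c f) (b * B * (x ^ (a - 2) * f x * (1 + f x) ^ (1 - c))) x := by
  have hpow : HasDerivAt (fun y => y ^ a) (a * x ^ (a - 1)) x :=
    hasDerivAt_rpow_const (Or.inl hx.ne')
  have hweight : HasDerivAt (fun y => (1 + f y) ^ (-c))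
      (deriv f x * (-c) * (1 + f x) ^ (-c - 1)) x :=
    (hf.const_add 1).rpow_const (Or.inl hfx.ne')
  refine (((hpow.const_mul B).mul hf').mul hweight).congr_deriv ?_
  have hf'' : deriv (deriv f) x = b / x ^ 2 * f x * (1 + f x)
      + c / (1 + f x) * deriv f x ^ 2 - a / x * deriv f x := by
    linear_combination hode x rfl
  simp only [Pi.mul_apply]
  rw [hf'', rpow_sub hx, rpow_sub hx, rpow_sub hfx, rpow_sub hfx, rpow_one, rpow_one, rpow_two,
    rpow_neg hfx.le]
  have : 0 < x ^ a := rpow_pos_of_pos hx a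
  have : 0 < (1 + f x) ^ c := rpow_pos_of_pos hfx c
  field_simp
  ring

theorem flux_deriv_div_flux {B a b c x : ℝ} {f : ℝ → ℝ} (hB : B ≠ 0) (hx : 0 < x)
    (hfx : 0 < 1 + f x) :
    b * B * (x ^ (a - 2) * f x * (1 + f x) ^ (1 - c)) / flux B a c f x
      = b * (f x * (1 + f x) / (x ^ 2 * deriv f x)) := by
  rw [flux, rpow_sub hx, rpow_sub hfx, rpow_one, rpow_two, rpow_neg hfx.le]
  have : 0 < x ^ a := rpow_pos_of_pos hx a
  have : 0 < (1 + f x) ^ c := rpow_pos_of_pos hfx c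
  field_simp

section FluxOnInterval

variable {B a b c t0 t1 : ℝ} {f : ℝ → ℝ}

theorem continuousOn_rpow_mul_mul_one_add_rpow {p q : ℝ} (ht0 : 0 < t0)
    (hcont : ContinuousOn f (Ico t0 t1)) (hf : ∀ t ∈ Ico t0 t1, 0 < 1 + f t) :
    ContinuousOn (fun s => s ^ p * f s * (1 + f s) ^ q) (Ico t0 t1) :=
  ((continuousOn_id.rpow_const fun _ hs => Or.inl (ht0.trans_le hs.1).ne').mul hcont).mul
    ((continuousOn_const.add hcont).rpow_const fun s hs => Or.inl (hf s hs).ne')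

theorem continuousOn_flux (ht0 : 0 < t0) (hreg : ContDiffOn ℝ 1 f (Ico t0 t1))
    (h0 : DifferentiableAt ℝ f t0) (hf : ∀ t ∈ Ico t0 t1, 0 < 1 + f t) :
    ContinuousOn (flux B a c f) (Ico t0 t1) :=
  ((continuousOn_const.mul (continuousOn_id.rpow_const fun _ hx =>
      Or.inl (ht0.trans_le hx.1).ne')).mul (continuousOn_deriv_of_contDiffOn_Ico hreg h0)).mul
    ((continuousOn_const.add hreg.continuousOn).rpow_const fun x hx => Or.inl (hf x hx).ne')

theorem SolvesODE.hasDerivAt_flux_of_mem (hode : SolvesODE a b c f (Ico t0 t1)) (ht0 : 0 < t0)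
    (hreg : ContDiffOn ℝ 2 f (Ico t0 t1)) (hf : ∀ t ∈ Ico t0 t1, 0 < 1 + f t) {x : ℝ}
    (hx : x ∈ Ioo t0 t1) :
    HasDerivAt (flux B a c f) (b * B * (x ^ (a - 2) * f x * (1 + f x) ^ (1 - c))) x := by
  have hreg' : ContDiffOn ℝ 1 (deriv f) (Ioo t0 t1) :=
    (hreg.mono Ioo_subset_Ico_self).deriv_of_isOpen isOpen_Ioo (by norm_num)
  exact hasDerivAt_flux (ht0.trans hx.1) (hf x (Ioo_subset_Ico_self hx))
    (((hreg.contDiffAt (Ico_mem_nhds hx.1 hx.2)).differentiableAt two_ne_zero).hasDerivAt)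
    ((hreg'.contDiffAt (isOpen_Ioo.mem_nhds hx)).differentiableAt one_ne_zero).hasDerivAt
    (hode.mono (singleton_subset_iff.2 (Ioo_subset_Ico_self hx)))

theorem SolvesODE.flux_eq_add_integral (hode : SolvesODE a b c f (Ico t0 t1)) (ht0 : 0 < t0)
    (hreg : ContDiffOn ℝ 2 f (Ico t0 t1)) (h0 : DifferentiableAt ℝ f t0)
    (hf : ∀ t ∈ Ico t0 t1, 0 < 1 + f t) {t : ℝ} (ht : t ∈ Ico t0 t1) :
    flux B a c f t
      = flux B a c f t0 + b * B * ∫ s in t0..t, s ^ (a - 2) * f s * (1 + f s) ^ (1 - c) := by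
  have hsub : Icc t0 t ⊆ Ico t0 t1 := Icc_subset_Ico_right ht.2
  have hsource := (continuousOn_rpow_mul_mul_one_add_rpow (p := a - 2) (q := 1 - c) ht0
    hreg.continuousOn hf).mono hsub
  rw [← intervalIntegral.integral_const_mul, integral_eq_sub_of_hasDerivAt_of_le ht.1
    ((continuousOn_flux ht0 (hreg.of_le one_le_two) h0 hf).mono hsub)
    (fun x hx => hode.hasDerivAt_flux_of_mem ht0 hreg hf (Ioo_subset_Ioo_right ht.2.le hx))
    ((continuousOn_const.mul hsource).intervalIntegrable_of_Icc ht.1)]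
  ring

theorem flux_pos {x : ℝ} (hB : 0 < B) (hx : 0 < x) (hdf : 0 < deriv f x) (hfx : 0 < 1 + f x) :
    0 < flux B a c f x := by
  have := rpow_pos_of_pos hfx (-c)
  unfold flux
  positivity

theorem SolvesODE.integral_eq_log_flux (hode : SolvesODE a b c f (Ico t0 t1)) (ht0 : 0 < t0)
    (hb : b ≠ 0) (hB : 0 < B) (hreg : ContDiffOn ℝ 2 f (Ico t0 t1))
    (hdf : ∀ t ∈ Ico t0 t1, 0 < deriv f t) (hf : ∀ t ∈ Ico t0 t1, 0 < 1 + f t) {t : ℝ}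
    (ht : t ∈ Ico t0 t1) :
    ∫ s in t0..t, f s * (1 + f s) / (s ^ 2 * deriv f s)
      = (log (flux B a c f t) - log (flux B a c f t0)) / b := by
  have hsub : Icc t0 t ⊆ Ico t0 t1 := Icc_subset_Ico_right ht.2
  have h0 : DifferentiableAt ℝ f t0 :=
    differentiableAt_of_deriv_ne_zero (hdf t0 (hsub (left_mem_Icc.2 ht.1))).ne'
  have hu : ContinuousOn (flux B a c f) (Icc t0 t) :=
    (continuousOn_flux ht0 (hreg.of_le one_le_two) h0 hf).mono hsub
  have hpos : ∀ x ∈ Icc t0 t, 0 < flux B a c f x := fun x hx =>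
    flux_pos hB (ht0.trans_le hx.1) (hdf x (hsub hx)) (hf x (hsub hx))
  have hsource := (continuousOn_rpow_mul_mul_one_add_rpow (p := a - 2) (q := 1 - c) ht0
    hreg.continuousOn hf).mono hsub
  have hlog := integral_div_eq_log_sub_log ht.1 hu hpos
    (fun x hx => hode.hasDerivAt_flux_of_mem ht0 hreg hf (Ioo_subset_Ioo_right ht.2.le hx))
    (((continuousOn_const.mul hsource).div hu fun x hx => (hpos x hx).ne').intervalIntegrable_of_Icc
      ht.1)
  rw [integral_congr fun x hx => flux_deriv_div_flux hB.ne' (ht0.trans_le (uIcc_of_le ht.1 ▸ hx).1)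
    (hf x (hsub (uIcc_of_le ht.1 ▸ hx))), intervalIntegral.integral_const_mul] at hlog
  rw [← hlog]
  field_simp

end FluxOnInterval

theorem flux_initial_eq_one {a c t0 : ℝ} {f : ℝ → ℝ} (ht0 : 0 < t0) (hf0 : 0 < 1 + f t0)
    (hdf0 : deriv f t0 ≠ 0) :
    flux ((1 + f t0) ^ c / (t0 ^ a * deriv f t0)) a c f t0 = 1 := by
  have := rpow_pos_of_pos ht0 a
  have := rpow_pos_of_pos hf0 c
  rw [flux, rpow_neg hf0.le]
  field_simp

theorem stmt_2_general
    (t0 t1 a b c A B fi fi0 : ℝ) (f g : ℝ → ℝ)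
    (ht0 : 0 < t0)
    (hb : 0 < b)
    (hfi : 0 < fi) (hfi0 : 0 < fi0)
    (hA : 0 < A)
    (hB : B = (1 + fi) ^ c / (t0 ^ a * fi0))
    (hg : ∀ t, g t = Real.exp (-A * ∫ s in t0..t, f s * (1 + f s) / (s ^ 2 * deriv f s)))
    (hreg : ContDiffOn ℝ 2 f (Set.Ico t0 t1))
    (hode : ∀ t ∈ Set.Ico t0 t1,
      deriv (deriv f) t + (a / t) * deriv f t
        - (b / t ^ 2) * f t * (1 + f t)
        - (c / (1 + f t)) * (deriv f t) ^ 2 = 0)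
    (hft0 : f t0 = fi) (hft0' : deriv f t0 = fi0) :
    (∀ t ∈ Set.Ico t0 t1,
        g t = (1 + b * B * ∫ s in t0..t, s ^ (a - 2) * f s * (1 + f s) ^ (1 - c))
            ^ (-(A / b)) ∧
        g t ∈ Set.Ioc (0 : ℝ) 1) ∧
    g t0 = 1 := by
  subst hft0 hft0'
  have hode : SolvesODE a b c f (Ico t0 t1) := hode
  have hdf := hode.deriv_pos ht0 hb hfi hfi0 (hreg.of_le one_le_two)
  have hf : ∀ t ∈ Ico t0 t1, 0 < f t := fun t ht =>
    hfi.trans_le (apply_le_of_deriv_nonneg (hreg.of_le one_le_two) (fun s hs => (hdf s hs).le) ht)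
  have h1f : ∀ t ∈ Ico t0 t1, 0 < 1 + f t := fun t ht => by linarith [hf t ht]
  have hBpos : 0 < B := hB ▸ by positivity
  have hflux0 : flux B a c f t0 = 1 := hB ▸ flux_initial_eq_one ht0 (by linarith) hfi0.ne'
  refine ⟨fun t ht => ?_, by simp [hg]⟩
  have hflux := hode.flux_eq_add_integral (B := B) ht0 hreg
    (differentiableAt_of_deriv_ne_zero hfi0.ne') h1f ht
  have hflux1 : 1 ≤ flux B a c f t := by
    have hI := integral_rpow_mul_mul_one_add_rpow_nonneg (p := a - 2) (q := 1 - c) ht0 ht.1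
      fun s hs => (hf s (Icc_subset_Ico_right ht.2 hs)).le
    rw [hflux, hflux0]
    nlinarith [mul_pos hb hBpos]
  have hg_eq : g t = flux B a c f t ^ (-(A / b)) := by
    rw [hg, hode.integral_eq_log_flux ht0 hb.ne' hBpos hreg hdf h1f ht, hflux0, log_one,
      sub_zero, rpow_def_of_pos (by linarith)]
    ring_nf
  refine ⟨by rw [hg_eq, hflux, hflux0], hg_eq ▸ rpow_pos_of_pos (by linarith) _,
    hg_eq ▸ rpow_le_one_of_one_le_of_nonpos hflux1 (neg_nonpos.2 (div_pos hA hb).le)⟩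

/-- If `f ∈ C²([t0,t1))` solves the ODE with the given initial data, then
`g(t) = (1 + b·B·∫_{t0}^t s^(a−2) f(s) (1+f(s))^(1−c) ds)^(−A/b)` for all `t ∈ [t0,t1)`;
moreover `g(t) ∈ (0,1]` on `[t0,t1)` and `g(t0) = 1`. -/
theorem stmt_2
    (t0 t1 a b c A B fi fi0 : ℝ) (f g : ℝ → ℝ)
    (ht0 : 0 < t0) (ht01 : t0 < t1)
    (ha : 1 < a) (hb : 0 < b) (hc : 1 < c) (hc' : c < 3 / 2)
    (hfi : 0 < fi) (hfi0 : 0 < fi0)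
    (hA : 0 < A) (hA' : A < 2 * b / (3 - 2 * c))
    (hB : B = (1 + fi) ^ c / (t0 ^ a * fi0))
    (hg : ∀ t, g t = Real.exp (-A * ∫ s in t0..t, f s * (1 + f s) / (s ^ 2 * deriv f s)))
    (hreg : ContDiffOn ℝ 2 f (Set.Ico t0 t1))
    (hode : ∀ t ∈ Set.Ico t0 t1,
      deriv (deriv f) t + (a / t) * deriv f t
        - (b / t ^ 2) * f t * (1 + f t)
        - (c / (1 + f t)) * (deriv f t) ^ 2 = 0)
    (hft0 : f t0 = fi) (hft0' : deriv f t0 = fi0) :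
    (∀ t ∈ Set.Ico t0 t1,
        g t = (1 + b * B * ∫ s in t0..t, s ^ (a - 2) * f s * (1 + f s) ^ (1 - c))
            ^ (-(A / b)) ∧
        g t ∈ Set.Ioc (0 : ℝ) 1) ∧
    g t0 = 1 :=
  stmt_2_general t0 t1 a b c A B fi fi0 f g ht0 hb hfi hfi0 hA hB hg hreg hode hft0 hft0'
end

section
/- Suppose f ∈ C²([t0,t1)) (with t1 > t0) solves the ODE with the given initial data. Then for every t ∈ (t0,t1) one has 𝙰·t^((ā−△)/2) + 𝙱·t^((ā+△)/2) + 1 < (1+f(t))^(−1). -/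
/-!
Put `g = (1 + f)⁻¹` and `P t = 𝙰 t ^ λ₁ + 𝙱 t ^ λ₂`, where `λ₁,₂ = (ā ∓ △) / 2` are the roots of
`λ² + (a - 1) λ = b`. The ODE gives `(t ^ a g')' = t ^ a (b / t² (g - 1) + (2 - c) f'² g³)`, while
`(t ^ a P')' = t ^ a (b / t² P)`, and `𝙰, 𝙱` are chosen so that `w = g - 1 - P` has `w(t0) = w'(t0) = 0`.
Hence `(t ^ a w')' = t ^ a (b / t² w + (2 - c) f'² g³)` is positive as long as `w` is, and a
continuous induction from `t0` (where the right side is `t0 ^ a (2 - c) f̊0² g³ > 0`) keeps `w > 0`.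
The same integrating factor `t ^ a` applied to `f'` first shows `f > f̊ > 0`, so that `g` stays finite.
-/

open Real Set Filter Topology

theorem pos_of_hasDerivAt_pos {g g' : ℝ → ℝ} {x y : ℝ} (hxy : x < y)
    (hg : ContinuousOn g (Icc x y)) (hderiv : ∀ t ∈ Ioo x y, HasDerivAt g (g' t) t)
    (hpos : ∀ t ∈ Ioo x y, 0 < g' t) (hx : 0 ≤ g x) : 0 < g y := by
  have hmono : StrictMonoOn g (Icc x y) :=
    strictMonoOn_of_hasDerivWithinAt_pos (convex_Icc x y) hg
      (by simpa only [interior_Icc] using fun t ht => (hderiv t ht).hasDerivWithinAt)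
      (by simpa only [interior_Icc] using hpos)
  linarith [hmono (left_mem_Icc.2 hxy.le) (right_mem_Icc.2 hxy.le) hxy]

theorem pos_of_forall_Ioo_pos {g : ℝ → ℝ} {t0 t1 : ℝ} (hg : ContinuousOn g (Ioo t0 t1))
    (hnear : ∀ᶠ t in 𝓝[>] t0, 0 < g t)
    (hstep : ∀ x ∈ Ioo t0 t1, (∀ s ∈ Ioo t0 x, 0 < g s) → 0 < g x) :
    ∀ t ∈ Ioo t0 t1, 0 < g t := by
  intro τ hτ
  by_contra! hτneg
  obtain ⟨u, hu, hgu⟩ := mem_nhdsGT_iff_exists_Ioo_subset.1 hnear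
  obtain ⟨v, hv⟩ := nonempty_Ioo.2 (lt_min hu hτ.1)
  set S := Icc v τ ∩ g ⁻¹' Iic 0
  have hSbdd : BddBelow S := ⟨v, fun x hx => hx.1.1⟩
  have hmS : sInf S ∈ S :=
    ((hg.mono (Icc_subset_Ioo hv.1 hτ.2)).preimage_isClosed_of_isClosed isClosed_Icc
      isClosed_Iic).csInf_mem ⟨τ, ⟨(hv.2.trans_le (min_le_right _ _)).le, le_rfl⟩, hτneg⟩ hSbdd
  refine (hstep _ ⟨hv.1.trans_le hmS.1.1, hmS.1.2.trans_lt hτ.2⟩ fun s hs => ?_).not_ge hmS.2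
  rcases lt_or_ge s v with hsv | hvs
  · exact hgu ⟨hs.1, hsv.trans (hv.2.trans_le (min_le_left _ _))⟩
  · by_contra! hgs
    exact hs.2.not_ge (csInf_le hSbdd ⟨⟨hvs, hs.2.le.trans hmS.1.2⟩, hgs⟩)

theorem eventually_pos_nhdsGT_of_continuousOn_Ico {g : ℝ → ℝ} {t0 t1 : ℝ}
    (hg : ContinuousOn g (Ico t0 t1)) (ht01 : t0 < t1) (h0 : 0 < g t0) :
    ∀ᶠ t in 𝓝[>] t0, 0 < g t :=
  (((hg t0 ⟨le_rfl, ht01⟩).mono_of_mem_nhdsWithin (Ico_mem_nhdsGE ht01)).mono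
    Ioi_subset_Ici_self).eventually (lt_mem_nhds h0)

theorem hasDerivAt_rpow_mul {X : ℝ → ℝ} {X' p t : ℝ} (ht : 0 < t) (hX : HasDerivAt X X' t) :
    HasDerivAt (fun s => s ^ p * X s) (t ^ p * (X' + p / t * X t)) t := by
  refine ((Real.hasDerivAt_rpow_const (p := p) (Or.inl ht.ne')).mul hX).congr_deriv ?_
  rw [rpow_sub_one ht.ne']
  ring

theorem pos_of_hasDerivAt_rpow_mul_deriv {p t0 t1 : ℝ} {w w' R : ℝ → ℝ} (ht0 : 0 < t0)
    (hw : ContinuousOn w (Ico t0 t1)) (hw' : ContinuousOn w' (Ico t0 t1))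
    (hderiv : ∀ t ∈ Ioo t0 t1, HasDerivAt w (w' t) t)
    (hR : ∀ t ∈ Ioo t0 t1, HasDerivAt (fun s => s ^ p * w' s) (R t) t)
    (hw0 : w t0 = 0) (hw'0 : 0 ≤ w' t0) (hRnear : ∀ᶠ t in 𝓝[>] t0, 0 < R t)
    (hRpos : ∀ t ∈ Ioo t0 t1, 0 < w t → 0 < R t) :
    ∀ t ∈ Ioo t0 t1, 0 < w t := by
  have key : ∀ x ∈ Ioo t0 t1, (∀ s ∈ Ioo t0 x, 0 < R s) → 0 < w x := by
    intro x hx hRx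
    have hsub : ∀ y ∈ Ioc t0 x, Icc t0 y ⊆ Ico t0 t1 := fun y hy =>
      Icc_subset_Ico_right (hy.2.trans_lt hx.2)
    have hw'pos : ∀ y ∈ Ioc t0 x, 0 < w' y := by
      intro y hy
      have hpow : ContinuousOn (fun s : ℝ => s ^ p) (Icc t0 y) :=
        continuousOn_id.rpow_const fun s hs => Or.inl (ht0.trans_le hs.1).ne'
      have := pos_of_hasDerivAt_pos hy.1 (hpow.mul (hw'.mono (hsub y hy)))
        (fun s hs => hR s ⟨hs.1, (hs.2.trans_le hy.2).trans hx.2⟩)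
        (fun s hs => hRx s ⟨hs.1, hs.2.trans_le hy.2⟩) (mul_nonneg (rpow_nonneg ht0.le p) hw'0)
      exact pos_of_mul_pos_right this (rpow_nonneg (ht0.trans hy.1).le p)
    exact pos_of_hasDerivAt_pos hx.1 (hw.mono (hsub x ⟨hx.1, le_rfl⟩))
      (fun s hs => hderiv s ⟨hs.1, hs.2.trans hx.2⟩) (fun s hs => hw'pos s ⟨hs.1, hs.2.le⟩) hw0.ge
  intro τ hτ
  refine pos_of_forall_Ioo_pos (hw.mono Ioo_subset_Ico_self) ?_
    (fun x hx hwx => key x hx fun s hs => hRpos s ⟨hs.1, hs.2.trans hx.2⟩ (hwx s hs)) τ hτ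
  obtain ⟨u, hu, hRu⟩ := mem_nhdsGT_iff_exists_Ioo_subset.1 hRnear
  filter_upwards [Ioo_mem_nhdsGT (lt_min hu (hτ.1.trans hτ.2))] with x hx
  exact key x ⟨hx.1, hx.2.trans_le (min_le_right _ _)⟩ fun s hs =>
    hRu ⟨hs.1, hs.2.trans (hx.2.trans_le (min_le_left _ _))⟩

theorem hasDerivAt_rpow_mul_deriv_rpow {a b l t : ℝ} (ht : 0 < t) (hl : l ^ 2 + (a - 1) * l = b) :
    HasDerivAt (fun s => s ^ a * (l * s ^ (l - 1))) (t ^ a * (b / t ^ 2 * t ^ l)) t := by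
  refine (hasDerivAt_rpow_mul (p := a) ht ((Real.hasDerivAt_rpow_const (p := l - 1)
    (Or.inl ht.ne')).const_mul l)).congr_deriv ?_
  rw [rpow_sub_one ht.ne', rpow_sub_one ht.ne', ← hl]
  field_simp
  ring

theorem rpow_combination_initial_values {t0 l1 l2 δ u v A B : ℝ} (ht0 : 0 < t0)
    (hδ : l2 - l1 = δ) (hδ0 : δ ≠ 0)
    (hA : A = t0 ^ (-l1) / δ * (t0 * v - l2 * u)) (hB : B = t0 ^ (-l2) / δ * (l1 * u - t0 * v)) :
    A * t0 ^ l1 + B * t0 ^ l2 = -u ∧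
      A * (l1 * t0 ^ (l1 - 1)) + B * (l2 * t0 ^ (l2 - 1)) = -v := by
  subst hA hB hδ
  have h1 : t0 ^ (-l1) * t0 ^ l1 = 1 := by rw [← rpow_add ht0]; simp
  have h2 : t0 ^ (-l2) * t0 ^ l2 = 1 := by rw [← rpow_add ht0]; simp
  rw [rpow_sub_one ht0.ne', rpow_sub_one ht0.ne']
  constructor
  · field_simp
    linear_combination (t0 * v - l2 * u) * h1 + (l1 * u - t0 * v) * h2
  · field_simp
    linear_combination l1 * (t0 * v - l2 * u) * h1 + l2 * (l1 * u - t0 * v) * h2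

section ODE

variable {a b c t0 t1 : ℝ} {f f' f'' : ℝ → ℝ}

theorem initial_lt_of_ode (ht0 : 0 < t0) (hb : 0 < b) (hc : 0 ≤ c)
    (hf0 : 0 < f t0) (hf'0 : 0 ≤ f' t0)
    (hf : ContinuousOn f (Ico t0 t1)) (hf' : ContinuousOn f' (Ico t0 t1))
    (hderiv : ∀ t ∈ Ioo t0 t1, HasDerivAt f (f' t) t)
    (hderiv' : ∀ t ∈ Ioo t0 t1, HasDerivAt f' (f'' t) t)
    (hode : ∀ t ∈ Ioo t0 t1,
      f'' t + a / t * f' t - b / t ^ 2 * f t * (1 + f t) - c / (1 + f t) * f' t ^ 2 = 0) :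
    ∀ t ∈ Ioo t0 t1, f t0 < f t := by
  have hRpos : ∀ s, 0 < s → 0 < f s →
      0 < s ^ a * (b / s ^ 2 * f s * (1 + f s) + c / (1 + f s) * f' s ^ 2) := fun s hs hfs =>
    mul_pos (rpow_pos_of_pos hs a) (add_pos_of_pos_of_nonneg (by positivity)
      (mul_nonneg (div_nonneg hc (by positivity)) (sq_nonneg _)))
  intro τ hτ
  have hRnear : ∀ᶠ s in 𝓝[>] t0,
      0 < s ^ a * (b / s ^ 2 * f s * (1 + f s) + c / (1 + f s) * f' s ^ 2) := by
    filter_upwards [self_mem_nhdsWithin,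
      eventually_pos_nhdsGT_of_continuousOn_Ico hf (hτ.1.trans hτ.2) hf0] with s hs hfs
    exact hRpos s (ht0.trans hs) hfs
  have := pos_of_hasDerivAt_rpow_mul_deriv (w := fun s => f s - f t0) ht0
    (hf.sub continuousOn_const) hf' (fun t ht => (hderiv t ht).sub_const _)
    (fun t ht => (hasDerivAt_rpow_mul (ht0.trans ht.1) (hderiv' t ht)).congr_deriv
      (by congr 1; linarith [hode t ht]))
    (sub_self _) hf'0 hRnear (fun t ht hwt => hRpos t (ht0.trans ht.1) (by linarith)) τ hτ
  linarith

theorem hasDerivAt_rpow_mul_deriv_inv_one_add {t : ℝ} (ht : 0 < t) (hf1 : 0 < 1 + f t)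
    (hderiv : HasDerivAt f (f' t) t) (hderiv' : HasDerivAt f' (f'' t) t)
    (hode : f'' t + a / t * f' t - b / t ^ 2 * f t * (1 + f t) - c / (1 + f t) * f' t ^ 2 = 0) :
    HasDerivAt (fun s => s ^ a * -(f' s / (1 + f s) ^ 2))
      (t ^ a * (b / t ^ 2 * ((1 + f t)⁻¹ - 1) + (2 - c) * f' t ^ 2 / (1 + f t) ^ 3)) t := by
  refine (hasDerivAt_rpow_mul ht
    (hderiv'.div ((hderiv.const_add 1).pow 2) (pow_ne_zero 2 hf1.ne')).neg).congr_deriv ?_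
  rw [Pi.neg_apply, Pi.div_apply, Pi.pow_apply, show f'' t = -(a / t * f' t) +
    b / t ^ 2 * f t * (1 + f t) + c / (1 + f t) * f' t ^ 2 by linarith]
  field_simp
  ring

theorem hasDerivAt_inv_one_add_sub_rpow {A B l1 l2 t : ℝ} (ht : 0 < t) (hf1 : 1 + f t ≠ 0)
    (hderiv : HasDerivAt f (f' t) t) :
    HasDerivAt (fun s => (1 + f s)⁻¹ - 1 - (A * s ^ l1 + B * s ^ l2))
      (-(f' t / (1 + f t) ^ 2) - (A * (l1 * t ^ (l1 - 1)) + B * (l2 * t ^ (l2 - 1)))) t :=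
  ((((hderiv.const_add 1).inv hf1).sub_const 1).sub
    (((Real.hasDerivAt_rpow_const (Or.inl ht.ne')).const_mul A).add
      ((Real.hasDerivAt_rpow_const (Or.inl ht.ne')).const_mul B))).congr_deriv (by ring)

theorem hasDerivAt_rpow_mul_deriv_inv_one_add_sub {A B l1 l2 t : ℝ} (ht : 0 < t)
    (hf1 : 0 < 1 + f t) (hderiv : HasDerivAt f (f' t) t) (hderiv' : HasDerivAt f' (f'' t) t)
    (hode : f'' t + a / t * f' t - b / t ^ 2 * f t * (1 + f t) - c / (1 + f t) * f' t ^ 2 = 0)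
    (hl1 : l1 ^ 2 + (a - 1) * l1 = b) (hl2 : l2 ^ 2 + (a - 1) * l2 = b) :
    HasDerivAt (fun s => s ^ a *
        (-(f' s / (1 + f s) ^ 2) - (A * (l1 * s ^ (l1 - 1)) + B * (l2 * s ^ (l2 - 1)))))
      (t ^ a * (b / t ^ 2 * ((1 + f t)⁻¹ - 1 - (A * t ^ l1 + B * t ^ l2)) +
        (2 - c) * f' t ^ 2 / (1 + f t) ^ 3)) t := by
  have h := (hasDerivAt_rpow_mul_deriv_inv_one_add ht hf1 hderiv hderiv' hode).sub
    (((hasDerivAt_rpow_mul_deriv_rpow ht hl1).const_mul A).add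
      ((hasDerivAt_rpow_mul_deriv_rpow ht hl2).const_mul B))
  have hfun : (fun s => s ^ a *
      (-(f' s / (1 + f s) ^ 2) - (A * (l1 * s ^ (l1 - 1)) + B * (l2 * s ^ (l2 - 1))))) =
      fun s => s ^ a * -(f' s / (1 + f s) ^ 2) -
        (A * (s ^ a * (l1 * s ^ (l1 - 1))) + B * (s ^ a * (l2 * s ^ (l2 - 1)))) := by
    funext s
    ring
  rw [hfun]
  exact h.congr_deriv (by ring)

theorem rpow_add_rpow_add_one_lt_inv_of_ode {A B l1 l2 : ℝ} (ht0 : 0 < t0) (hb : 0 < b)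
    (hc2 : c < 2) (hf1 : ∀ t ∈ Ico t0 t1, 0 < 1 + f t) (hf'0 : f' t0 ≠ 0)
    (hf : ContinuousOn f (Ico t0 t1)) (hf' : ContinuousOn f' (Ico t0 t1))
    (hderiv : ∀ t ∈ Ioo t0 t1, HasDerivAt f (f' t) t)
    (hderiv' : ∀ t ∈ Ioo t0 t1, HasDerivAt f' (f'' t) t)
    (hode : ∀ t ∈ Ioo t0 t1,
      f'' t + a / t * f' t - b / t ^ 2 * f t * (1 + f t) - c / (1 + f t) * f' t ^ 2 = 0)
    (hl1 : l1 ^ 2 + (a - 1) * l1 = b) (hl2 : l2 ^ 2 + (a - 1) * l2 = b)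
    (hAB : A * t0 ^ l1 + B * t0 ^ l2 = -(f t0 / (1 + f t0)))
    (hAB' : A * (l1 * t0 ^ (l1 - 1)) + B * (l2 * t0 ^ (l2 - 1)) = -(f' t0 / (1 + f t0) ^ 2)) :
    ∀ t ∈ Ioo t0 t1, A * t ^ l1 + B * t ^ l2 + 1 < (1 + f t)⁻¹ := by
  intro t ht
  have hf1t0 := hf1 t0 (left_mem_Ico.2 (ht.1.trans ht.2))
  have hpow : ∀ p : ℝ, ContinuousOn (fun s : ℝ => s ^ p) (Ico t0 t1) := fun p =>
    continuousOn_id.rpow_const fun s hs => Or.inl (ht0.trans_le hs.1).ne'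
  set w : ℝ → ℝ := fun s => (1 + f s)⁻¹ - 1 - (A * s ^ l1 + B * s ^ l2) with hw
  set w' : ℝ → ℝ := fun s =>
    -(f' s / (1 + f s) ^ 2) - (A * (l1 * s ^ (l1 - 1)) + B * (l2 * s ^ (l2 - 1))) with hw'
  set R : ℝ → ℝ := fun s => s ^ a * (b / s ^ 2 * w s + (2 - c) * f' s ^ 2 / (1 + f s) ^ 3)
  have hwc : ContinuousOn w (Ico t0 t1) :=
    (((hf.const_add 1).inv₀ fun s hs => (hf1 s hs).ne').sub continuousOn_const).sub
      (((hpow l1).const_smul A).add ((hpow l2).const_smul B))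
  have hw'c : ContinuousOn w' (Ico t0 t1) :=
    ((hf'.div ((hf.const_add 1).pow 2) fun s hs => (pow_pos (hf1 s hs) 2).ne').neg).sub
      ((((hpow (l1 - 1)).const_smul l1).const_smul A).add
        (((hpow (l2 - 1)).const_smul l2).const_smul B))
  have hRc : ContinuousOn R (Ico t0 t1) :=
    (hpow a).mul (((continuousOn_const.div (continuousOn_id.pow 2) fun s hs =>
      (pow_pos (ht0.trans_le hs.1) 2).ne').mul hwc).add ((continuousOn_const.mul (hf'.pow 2)).div
        ((hf.const_add 1).pow 3) fun s hs => (pow_pos (hf1 s hs) 3).ne'))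
  have hwderiv : ∀ s ∈ Ioo t0 t1, HasDerivAt w (w' s) s := fun s hs =>
    hasDerivAt_inv_one_add_sub_rpow (ht0.trans hs.1) (hf1 s (Ioo_subset_Ico_self hs)).ne'
      (hderiv s hs)
  have hRderiv : ∀ s ∈ Ioo t0 t1, HasDerivAt (fun s => s ^ a * w' s) (R s) s := fun s hs =>
    hasDerivAt_rpow_mul_deriv_inv_one_add_sub (ht0.trans hs.1) (hf1 s (Ioo_subset_Ico_self hs))
      (hderiv s hs) (hderiv' s hs) (hode s hs) hl1 hl2
  have hw0 : w t0 = 0 := by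
    simp only [hw, hAB]
    field_simp
    ring
  have hw'0 : w' t0 = 0 := by
    simp only [hw', hAB']
    ring
  have hR0 : 0 < R t0 := by
    simp only [R, hw0]
    have : 0 < 2 - c := by linarith
    positivity
  have hRpos : ∀ s ∈ Ioo t0 t1, 0 < w s → 0 < R s := fun s hs hws =>
    have := hf1 s (Ioo_subset_Ico_self hs)
    have := ht0.trans hs.1
    mul_pos (rpow_pos_of_pos this a) (add_pos_of_pos_of_nonneg (by positivity)
      (div_nonneg (mul_nonneg (by linarith) (sq_nonneg _)) (by positivity)))
  have := pos_of_hasDerivAt_rpow_mul_deriv ht0 hwc hw'c hwderiv hRderiv hw0 hw'0.ge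
    (eventually_pos_nhdsGT_of_continuousOn_Ico hRc (ht.1.trans ht.2) hR0) hRpos t ht
  simp only [hw] at this
  linarith

end ODE

theorem ContDiffOn.continuousOn_deriv_Ico_s6 {f : ℝ → ℝ} {t0 t1 : ℝ} {n : WithTop ℕ∞}
    (hf : ContDiffOn ℝ n f (Ico t0 t1)) (hn : 1 ≤ n) (h0 : DifferentiableAt ℝ f t0) :
    ContinuousOn (deriv f) (Ico t0 t1) := by
  refine (hf.continuousOn_derivWithin (uniqueDiffOn_Ico t0 t1) hn).congr fun t ht => ?_
  rcases ht.1.eq_or_lt with rfl | ht0t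
  · exact (h0.derivWithin (uniqueDiffOn_Ico _ _ _ ht)).symm
  · exact (derivWithin_of_mem_nhds (Ico_mem_nhds ht0t ht.2)).symm

theorem stmt_6_general
    (t0 t1 a b c fi fi0 abar delta AA BB : ℝ) (f : ℝ → ℝ)
    (ht0 : 0 < t0)
    (hb : 0 < b) (hc : 1 < c) (hc' : c < 3 / 2)
    (hfi : 0 < fi) (hfi0 : 0 < fi0)
    (habar : abar = 1 - a)
    (hdelta : delta = Real.sqrt ((1 - a) ^ 2 + 4 * b))
    (hAA : AA = t0 ^ (-((abar - delta) / 2)) / delta *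
      (t0 * fi0 / (1 + fi) ^ 2 - (abar + delta) / 2 * (fi / (1 + fi))))
    (hBB : BB = t0 ^ (-((abar + delta) / 2)) / delta *
      ((abar - delta) / 2 * (fi / (1 + fi)) - t0 * fi0 / (1 + fi) ^ 2))
    (hreg : ContDiffOn ℝ 2 f (Set.Ico t0 t1))
    (hode : ∀ t ∈ Set.Ico t0 t1,
      deriv (deriv f) t + (a / t) * deriv f t
        - (b / t ^ 2) * f t * (1 + f t)
        - (c / (1 + f t)) * (deriv f t) ^ 2 = 0)
    (hft0 : f t0 = fi) (hft0' : deriv f t0 = fi0) :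
    ∀ t ∈ Set.Ioo t0 t1,
      AA * t ^ ((abar - delta) / 2) + BB * t ^ ((abar + delta) / 2) + 1 < (1 + f t)⁻¹ := by
  have hdelta2 : delta ^ 2 = (1 - a) ^ 2 + 4 * b := hdelta ▸ Real.sq_sqrt (by positivity)
  have hdelta0 : 0 < delta := hdelta ▸ Real.sqrt_pos.2 (by positivity)
  obtain ⟨hinit, hinit'⟩ := rpow_combination_initial_values (l1 := (abar - delta) / 2)
    (l2 := (abar + delta) / 2) (A := AA) (B := BB) (u := fi / (1 + fi))
    (v := fi0 / (1 + fi) ^ 2) ht0 (by ring) hdelta0.ne' (by rw [hAA, mul_div_assoc])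
    (by rw [hBB, mul_div_assoc])
  have hIoo : ContDiffOn ℝ 2 f (Ioo t0 t1) := hreg.mono Ioo_subset_Ico_self
  have hf'c : ContinuousOn (deriv f) (Ico t0 t1) := hreg.continuousOn_deriv_Ico_s6 (by norm_num)
    (differentiableAt_of_deriv_ne_zero (hft0' ▸ hfi0.ne'))
  have hderiv : ∀ t ∈ Ioo t0 t1, HasDerivAt f (deriv f t) t := fun t ht =>
    ((hIoo.differentiableOn (by norm_num)) t ht |>.differentiableAt
      (isOpen_Ioo.mem_nhds ht)).hasDerivAt
  have hderiv' : ∀ t ∈ Ioo t0 t1, HasDerivAt (deriv f) (deriv (deriv f) t) t := fun t ht =>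
    ((hIoo.deriv_of_isOpen isOpen_Ioo (m := 1) (by norm_num)).differentiableOn one_ne_zero t ht
      |>.differentiableAt (isOpen_Ioo.mem_nhds ht)).hasDerivAt
  have hode' := fun t (ht : t ∈ Ioo t0 t1) => hode t (Ioo_subset_Ico_self ht)
  have hf1 : ∀ t ∈ Ico t0 t1, 0 < 1 + f t := by
    rintro t ⟨ht0t, htt1⟩
    rcases ht0t.eq_or_lt with rfl | ht0t
    · linarith
    · linarith [initial_lt_of_ode ht0 hb (by linarith) (hft0 ▸ hfi) (hft0' ▸ hfi0.le)
        hreg.continuousOn hf'c hderiv hderiv' hode' t ⟨ht0t, htt1⟩]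
  refine rpow_add_rpow_add_one_lt_inv_of_ode ht0 hb (by linarith) hf1 (hft0' ▸ hfi0.ne')
    hreg.continuousOn hf'c hderiv hderiv' hode' ?_ ?_ (by rw [hinit, hft0])
    (by rw [hinit', hft0, hft0']) <;> subst habar <;> nlinarith

/-- If `f ∈ C²([t0,t1))` solves the ODE with the given initial data, then
for every `t ∈ (t0,t1)` one has `𝙰 t^((ā−△)/2) + 𝙱 t^((ā+△)/2) + 1 < (1+f(t))⁻¹`. -/
theorem stmt_6
    (t0 t1 a b c fi fi0 abar delta AA BB : ℝ) (f : ℝ → ℝ)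
    (ht0 : 0 < t0) (ht01 : t0 < t1)
    (ha : 1 < a) (hb : 0 < b) (hc : 1 < c) (hc' : c < 3 / 2)
    (hfi : 0 < fi) (hfi0 : 0 < fi0)
    (habar : abar = 1 - a)
    (hdelta : delta = Real.sqrt ((1 - a) ^ 2 + 4 * b))
    (hAA : AA = t0 ^ (-((abar - delta) / 2)) / delta *
      (t0 * fi0 / (1 + fi) ^ 2 - (abar + delta) / 2 * (fi / (1 + fi))))
    (hBB : BB = t0 ^ (-((abar + delta) / 2)) / delta *
      ((abar - delta) / 2 * (fi / (1 + fi)) - t0 * fi0 / (1 + fi) ^ 2))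
    (hreg : ContDiffOn ℝ 2 f (Set.Ico t0 t1))
    (hode : ∀ t ∈ Set.Ico t0 t1,
      deriv (deriv f) t + (a / t) * deriv f t
        - (b / t ^ 2) * f t * (1 + f t)
        - (c / (1 + f t)) * (deriv f t) ^ 2 = 0)
    (hft0 : f t0 = fi) (hft0' : deriv f t0 = fi0) :
    ∀ t ∈ Set.Ioo t0 t1,
      AA * t ^ ((abar - delta) / 2) + BB * t ^ ((abar + delta) / 2) + 1 < (1 + f t)⁻¹ :=
  stmt_6_general t0 t1 a b c fi fi0 abar delta AA BB f ht0 hb hc hc' hfi hfi0 habar hdelta hAA hBB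
    hreg hode hft0 hft0'
end

section
/- The set R := { t > t0 : 𝙰·t^((ā−△)/2) + 𝙱·t^((ā+△)/2) + 1 = 0 } is nonempty and has a minimum t_star = min R, and t_star > t0. -/
/-!
Write `p = (ā - △)/2 < 0 < q = (ā + △)/2`. The coefficients `𝙰, 𝙱` are chosen so that
`g t = 𝙰 t^p + 𝙱 t^q + 1` takes the value `1/(1 + f̊) > 0` at `t0`, while `𝙱 < 0` forces
`g t → -∞`. By the intermediate value theorem `g` vanishes on `(t0, ∞)`, and its zero set there
is closed in `[t0, ∞)` and avoids `t0`, so it has a least element.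
-/

open Real Set Filter Topology

lemma exists_isLeast_zero_of_continuousOn_Ici {g : ℝ → ℝ} {a : ℝ}
    (hg : ContinuousOn g (Ici a)) (hga : 0 < g a) (hlim : Tendsto g atTop atBot) :
    ∃ u, IsLeast {t | a < t ∧ g t = 0} u := by
  obtain ⟨M, haM, hgM⟩ := ((tendsto_atTop.mp tendsto_id a).and (hlim.eventually_le_atBot 0)).exists
  obtain ⟨T, hT, hgT⟩ : (0 : ℝ) ∈ g '' Icc a M :=
    intermediate_value_Icc' haM (hg.mono Icc_subset_Ici_self) ⟨hgM, hga.le⟩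
  have hzeros : {t | a < t ∧ g t = 0} = Ici a ∩ g ⁻¹' {0} := by
    ext t
    refine ⟨fun ht => ⟨ht.1.le, ht.2⟩, fun ht => ⟨lt_of_le_of_ne ht.1 ?_, ht.2⟩⟩
    rintro rfl
    exact hga.ne' ht.2
  rw [hzeros]
  exact ⟨_, (hg.preimage_isClosed_of_isClosed isClosed_Ici isClosed_singleton).isLeast_csInf
    ⟨T, hT.1, hgT⟩ ⟨a, fun _ ht => ht.1⟩⟩

section PowerCombination

variable {A B C p q : ℝ}

lemma continuousOn_mul_rpow_add_mul_rpow {s : Set ℝ} (hs : ∀ x ∈ s, 0 < x) :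
    ContinuousOn (fun t => A * t ^ p + B * t ^ q + C) s := by
  have hpow (r : ℝ) : ContinuousOn (fun t : ℝ => t ^ r) s :=
    continuousOn_id.rpow_const fun x hx => Or.inl (hs x hx).ne'
  exact ((continuousOn_const.mul (hpow p)).add (continuousOn_const.mul (hpow q))).add
    continuousOn_const

lemma tendsto_mul_rpow_add_mul_rpow_atBot (hp : p < 0) (hq : 0 < q) (hB : B < 0) :
    Tendsto (fun t => A * t ^ p + B * t ^ q + C) atTop atBot := by
  have hdecay : Tendsto (fun t : ℝ => A * t ^ p + C) atTop (𝓝 (A * 0 + C)) := by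
    have := tendsto_rpow_neg_atTop (neg_pos.mpr hp)
    rw [neg_neg] at this
    exact (this.const_mul A).add_const C
  have := hdecay.add_atBot ((tendsto_rpow_atTop hq).const_mul_atTop_of_neg hB)
  exact this.congr fun t => by ring

/-- The coefficients of `t ↦ A t^p + B t^q` fitted to initial data at `t0`. -/
lemma mul_rpow_add_mul_rpow_at_initial {t0 d : ℝ} (ht0 : 0 < t0) (hd : q - p = d) (hd0 : d ≠ 0)
    (X Y : ℝ) :
    t0 ^ (-p) / d * (X - q * Y) * t0 ^ p + t0 ^ (-q) / d * (p * Y - X) * t0 ^ q = -Y := by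
  have hcancel (r : ℝ) : t0 ^ (-r) * t0 ^ r = 1 := by
    rw [← rpow_add ht0, neg_add_cancel, rpow_zero]
  calc _ = t0 ^ (-p) * t0 ^ p * (X - q * Y) / d + t0 ^ (-q) * t0 ^ q * (p * Y - X) / d := by ring
    _ = -Y := by
      rw [hcancel, hcancel]
      field_simp
      linear_combination -Y * hd

end PowerCombination

theorem stmt_9_general
    (t0 a b fi fi0 abar delta AA BB : ℝ)
    (ht0 : 0 < t0)
    (hb : 0 < b)
    (hfi : 0 < fi) (hfi0 : 0 < fi0)
    (habar : abar = 1 - a)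
    (hdelta : delta = Real.sqrt ((1 - a) ^ 2 + 4 * b))
    (hAA : AA = t0 ^ (-((abar - delta) / 2)) / delta *
      (t0 * fi0 / (1 + fi) ^ 2 - (abar + delta) / 2 * (fi / (1 + fi))))
    (hBB : BB = t0 ^ (-((abar + delta) / 2)) / delta *
      ((abar - delta) / 2 * (fi / (1 + fi)) - t0 * fi0 / (1 + fi) ^ 2)) :
    ∃ tstar : ℝ,
      IsLeast {t : ℝ | t0 < t ∧
        AA * t ^ ((abar - delta) / 2) + BB * t ^ ((abar + delta) / 2) + 1 = 0} tstar ∧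
      t0 < tstar := by
  set p := (abar - delta) / 2 with hp_def
  set q := (abar + delta) / 2 with hq_def
  have habs : |abar| < delta := by
    rw [hdelta, ← habar, ← sqrt_sq_eq_abs]
    exact sqrt_lt_sqrt (sq_nonneg _) (by linarith)
  obtain ⟨hp, hq⟩ : p < 0 ∧ 0 < q := by
    constructor <;> linarith [abs_lt.mp habs]
  have hdelta_pos : 0 < delta := (abs_nonneg _).trans_lt habs
  have hY : 0 < fi / (1 + fi) ∧ fi / (1 + fi) < 1 :=
    ⟨by positivity, (div_lt_one (by positivity)).mpr (by linarith)⟩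
  have hBB_neg : BB < 0 := by
    rw [hBB]
    refine mul_neg_of_pos_of_neg (by positivity) ?_
    linarith [mul_neg_of_neg_of_pos hp hY.1, show 0 < t0 * fi0 / (1 + fi) ^ 2 by positivity]
  have hg0 : 0 < AA * t0 ^ p + BB * t0 ^ q + 1 := by
    rw [hAA, hBB, mul_rpow_add_mul_rpow_at_initial ht0 (by ring) hdelta_pos.ne']
    linarith
  obtain ⟨u, hu⟩ := exists_isLeast_zero_of_continuousOn_Ici
    (continuousOn_mul_rpow_add_mul_rpow fun x hx => ht0.trans_le hx) hg0
    (tendsto_mul_rpow_add_mul_rpow_atBot hp hq hBB_neg)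
  exact ⟨u, hu, hu.1.1⟩

/-- The set `R = { t > t0 : 𝙰 t^((ā−△)/2) + 𝙱 t^((ā+△)/2) + 1 = 0 }`
is nonempty and has a minimum `t_star = min R`, and `t_star > t0`. -/
theorem stmt_9
    (t0 a b c fi fi0 abar delta AA BB : ℝ)
    (ht0 : 0 < t0)
    (ha : 1 < a) (hb : 0 < b) (hc : 1 < c) (hc' : c < 3 / 2)
    (hfi : 0 < fi) (hfi0 : 0 < fi0)
    (habar : abar = 1 - a)
    (hdelta : delta = Real.sqrt ((1 - a) ^ 2 + 4 * b))
    (hAA : AA = t0 ^ (-((abar - delta) / 2)) / delta *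
      (t0 * fi0 / (1 + fi) ^ 2 - (abar + delta) / 2 * (fi / (1 + fi))))
    (hBB : BB = t0 ^ (-((abar + delta) / 2)) / delta *
      ((abar - delta) / 2 * (fi / (1 + fi)) - t0 * fi0 / (1 + fi) ^ 2)) :
    ∃ tstar : ℝ,
      IsLeast {t : ℝ | t0 < t ∧
        AA * t ^ ((abar - delta) / 2) + BB * t ^ ((abar + delta) / 2) + 1 = 0} tstar ∧
      t0 < tstar :=
  stmt_9_general t0 a b fi fi0 abar delta AA BB ht0 hb hfi hfi0 habar hdelta hAA hBB
end

section
/- Assume the initial data satisfies f̊0 > ā·(1+f̊)/(c̄·t0) (equivalently t0^ā > 𝙴^(−1)), and assume there exists a C² solution f of the ODE on a maximal interval [t0,t_m) with t_m ≥ t_star (as guaranteed by the a priori estimates). Then t^star := (t0^ā − 𝙴^(−1))^(1/ā) is well defined, finite, and t0 < t_star < t^star < ∞. -/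
open Real Set Filter Topology MeasureTheory intervalIntegral

/-- The half-open time interval `[t0, tm)`, where the endpoint `tm` is an extended real
(allowing `tm = ∞`). -/
def odeDom (t0 : ℝ) (tm : EReal) : Set ℝ := {t : ℝ | t0 ≤ t ∧ (t : EReal) < tm}

/-- The filter of approach `t → tm⁻` on `ℝ`, for an extended-real endpoint `tm`
(for finite `tm` this is `𝓝[<] tm`, for `tm = ∞` it is `atTop`). -/
noncomputable def approachF (tm : EReal) : Filter ℝ :=
  Filter.comap (fun x : ℝ => (x : EReal)) (nhdsWithin tm (Set.Iio tm))

/-- `f` is a `C²` solution on `[t0, tm)` of the ODE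
`f'' + (a/t) f' − (b/t²) f (1+f) − (c/(1+f)) (f')² = 0` with data `f(t0) = f̊`, `f'(t0) = f̊0`. -/
def IsSol (t0 a b c fi fi0 : ℝ) (f : ℝ → ℝ) (tm : EReal) : Prop :=
  (t0 : EReal) < tm ∧
  ContDiffOn ℝ 2 f (odeDom t0 tm) ∧
  (∀ t ∈ odeDom t0 tm,
    deriv (deriv f) t + (a / t) * deriv f t
      - (b / t ^ 2) * f t * (1 + f t)
      - (c / (1 + f t)) * (deriv f t) ^ 2 = 0) ∧
  f t0 = fi ∧ deriv f t0 = fi0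

/-- `f` is a solution on `[t0, tm)` and `[t0, tm)` is the maximal interval of existence:
no solution on a strictly larger interval agrees with `f` on `[t0, tm)`. -/
def IsMaxSol (t0 a b c fi fi0 : ℝ) (f : ℝ → ℝ) (tm : EReal) : Prop :=
  IsSol t0 a b c fi fi0 f tm ∧
  ∀ (F : ℝ → ℝ) (tm' : EReal), tm < tm' → IsSol t0 a b c fi fi0 F tm' →
    ¬ Set.EqOn F f (odeDom t0 tm)

/-! `F t = 𝙰 t^p + 𝙱 t^q`, with `p, q = (ā ∓ △)/2` the roots of `r² + (a - 1) r = b`, solves the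
Euler equation `t² F'' + a t F' = b F` with `F t0 = -f̊/(1+f̊)` and `F' t0 = -f̊0/(1+f̊)²`, and
`t_star` is a time where `F = -1`. The data make `F ≤ 0` on `[t0, ∞)`, so the flux `t^a F'` is
nonincreasing and `F t - F t0 ≤ t0^a F' t0 (t^ā - t0^ā) / ā`. At `t_star` this reads
`t_star^ā - t0^ā ≥ c̄ 𝙴⁻¹ > -𝙴⁻¹` (since `c < 2`), and the negative power `1/ā` reverses the
inequality. -/

lemma antitoneOn_Ici_of_hasDerivAt {f f' : ℝ → ℝ} {t0 : ℝ}
    (hf : ∀ x, t0 ≤ x → HasDerivAt f (f' x) x) (hf' : ∀ x, t0 < x → f' x ≤ 0) :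
    AntitoneOn f (Ici t0) := by
  refine antitoneOn_of_hasDerivWithinAt_nonpos (f' := f') (convex_Ici t0)
    (fun x hx => (hf x hx).continuousAt.continuousWithinAt) (fun x hx => ?_) (fun x hx => ?_)
  all_goals rw [interior_Ici] at hx
  · exact (hf x hx.le).hasDerivWithinAt
  · exact hf' x hx

lemma sub_le_of_rpow_mul_deriv_le {F F' : ℝ → ℝ} {a K t0 t : ℝ} (ht0 : 0 < t0) (ha : a ≠ 1)
    (hF : ∀ x, t0 ≤ x → HasDerivAt F (F' x) x) (hK : ∀ x, t0 < x → x ^ a * F' x ≤ K)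
    (ht : t0 ≤ t) :
    F t - F t0 ≤ K * (t ^ (1 - a) - t0 ^ (1 - a)) / (1 - a) := by
  have ha' : 1 - a ≠ 0 := sub_ne_zero.2 ha.symm
  have hG : AntitoneOn (fun x => F x - K * x ^ (1 - a) / (1 - a)) (Ici t0) := by
    refine antitoneOn_Ici_of_hasDerivAt
      (fun x hx => (hF x hx).sub (((hasDerivAt_rpow_const
        (Or.inl (ht0.trans_le hx).ne')).const_mul K).div_const (1 - a))) (fun x hx => ?_)
    have hx0 : 0 < x := ht0.trans hx
    have hxa : 0 < x ^ a := rpow_pos_of_pos hx0 a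
    have hcancel : K * ((1 - a) * x ^ (1 - a - 1)) / (1 - a) = K / x ^ a := by
      rw [show 1 - a - 1 = -a by ring, rpow_neg hx0.le]; field_simp
    rw [hcancel, sub_nonpos, le_div_iff₀ hxa, mul_comm]
    exact hK x hx
  have := hG self_mem_Ici ht ht
  simp only at this
  rw [mul_sub, sub_div]
  linarith

lemma sub_le_of_euler_eq {F F' F'' : ℝ → ℝ} {a b t0 t : ℝ} (ht0 : 0 < t0) (ha : a ≠ 1)
    (hb : 0 ≤ b) (hF : ∀ x, t0 ≤ x → HasDerivAt F (F' x) x)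
    (hF' : ∀ x, t0 ≤ x → HasDerivAt F' (F'' x) x)
    (heq : ∀ x, t0 < x → x ^ 2 * F'' x + a * x * F' x = b * F x)
    (hneg : ∀ x, t0 < x → F x ≤ 0) (ht : t0 ≤ t) :
    F t - F t0 ≤ t0 ^ a * F' t0 * (t ^ (1 - a) - t0 ^ (1 - a)) / (1 - a) := by
  have hflux : AntitoneOn (fun x => x ^ a * F' x) (Ici t0) := by
    refine antitoneOn_Ici_of_hasDerivAt
      (fun x hx => (hasDerivAt_rpow_const (Or.inl (ht0.trans_le hx).ne')).mul (hF' x hx))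
      (fun x hx => ?_)
    have hx0 : 0 < x := ht0.trans hx
    calc a * x ^ (a - 1) * F' x + x ^ a * F'' x
        = x ^ a / x ^ 2 * (x ^ 2 * F'' x + a * x * F' x) := by
          rw [rpow_sub_one hx0.ne']; field_simp; ring
      _ = x ^ a / x ^ 2 * (b * F x) := by rw [heq x hx]
      _ ≤ 0 := mul_nonpos_of_nonneg_of_nonpos (by positivity)
          (mul_nonpos_of_nonneg_of_nonpos hb (hneg x hx))
  exact sub_le_of_rpow_mul_deriv_le ht0 ha hF
    (fun x hx => hflux self_mem_Ici (mem_Ici.2 hx.le) hx.le) ht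

noncomputable def eulerSol (A B p q t : ℝ) : ℝ := A * t ^ p + B * t ^ q

section eulerSol

variable {A B p q t0 x : ℝ}

lemma hasDerivAt_eulerSol (hx : 0 < x) :
    HasDerivAt (eulerSol A B p q) (eulerSol (A * p) (B * q) (p - 1) (q - 1) x) x :=
  (((hasDerivAt_rpow_const (p := p) (Or.inl hx.ne')).const_mul A).add
    ((hasDerivAt_rpow_const (p := q) (Or.inl hx.ne')).const_mul B)).congr_deriv
    (by simp only [eulerSol]; ring)

lemma eulerSol_euler_eq {a b : ℝ} (hp : p ^ 2 + (a - 1) * p = b) (hq : q ^ 2 + (a - 1) * q = b)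
    (hx : 0 < x) :
    x ^ 2 * eulerSol (A * p * (p - 1)) (B * q * (q - 1)) (p - 1 - 1) (q - 1 - 1) x
      + a * x * eulerSol (A * p) (B * q) (p - 1) (q - 1) x = b * eulerSol A B p q x := by
  simp only [eulerSol, rpow_sub_one hx.ne']
  field_simp
  linear_combination (A * x ^ p) * hp + (B * x ^ q) * hq

lemma eulerSol_initial {y0 y1 : ℝ} (ht0 : 0 < t0) (hpq : p ≠ q)
    (hA : A = t0 ^ (-p) / (q - p) * (q * y0 - t0 * y1))
    (hB : B = t0 ^ (-q) / (q - p) * (t0 * y1 - p * y0)) :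
    eulerSol A B p q t0 = y0 ∧ eulerSol (A * p) (B * q) (p - 1) (q - 1) t0 = y1 := by
  have hqp : q - p ≠ 0 := sub_ne_zero.2 hpq.symm
  subst hA hB
  simp only [eulerSol, rpow_neg ht0.le, rpow_sub_one ht0.ne']
  constructor
  · field_simp; ring
  · field_simp; ring


lemma eulerSol_nonpos_of_le {t : ℝ} (ht0 : 0 < t0) (hp : p ≤ 0) (hq : 0 ≤ q) (hB : B ≤ 0)
    (h0 : eulerSol A B p q t0 ≤ 0) (ht : t0 ≤ t) : eulerSol A B p q t ≤ 0 := by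
  have ht' : 0 < t := ht0.trans_le ht
  have hBq : B * t ^ q ≤ B * t0 ^ q := mul_le_mul_of_nonpos_left (rpow_le_rpow ht0.le ht hq) hB
  rcases le_or_gt A 0 with hA | hA
  · have hAp : A * t ^ p ≤ 0 := mul_nonpos_of_nonpos_of_nonneg hA (rpow_pos_of_pos ht' p).le
    have hBq' : B * t ^ q ≤ 0 := mul_nonpos_of_nonpos_of_nonneg hB (rpow_pos_of_pos ht' q).le
    exact add_nonpos hAp hBq'
  · have hAp : A * t ^ p ≤ A * t0 ^ p :=
      mul_le_mul_of_nonneg_left (rpow_le_rpow_of_nonpos ht0 ht hp) hA.le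
    unfold eulerSol at h0 ⊢
    linarith

/-- With nonpositive initial data the coefficient of the growing power `t^q` is negative. -/
lemma eulerSol_nonpos_of_initial {y0 y1 t : ℝ} (ht0 : 0 < t0) (hp : p < 0) (hq : 0 < q)
    (hy0 : y0 ≤ 0) (hy1 : y1 < 0)
    (hA : A = t0 ^ (-p) / (q - p) * (q * y0 - t0 * y1))
    (hB : B = t0 ^ (-q) / (q - p) * (t0 * y1 - p * y0)) (ht : t0 ≤ t) :
    eulerSol A B p q t ≤ 0 := by
  have hB' : B ≤ 0 := by
    rw [hB]
    refine mul_nonpos_of_nonneg_of_nonpos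
      (div_nonneg (rpow_pos_of_pos ht0 _).le (sub_pos.2 (hp.trans hq)).le) ?_
    nlinarith [mul_nonneg_of_nonpos_of_nonpos hp.le hy0]
  refine eulerSol_nonpos_of_le ht0 hp.le hq.le hB' ?_ ht
  rw [(eulerSol_initial ht0 (hp.trans hq).ne hA hB).1]
  exact hy0

end eulerSol

lemma indicial_roots {a b δ : ℝ} (hb : 0 < b) (hδ : δ = √((1 - a) ^ 2 + 4 * b)) :
    ((1 - a - δ) / 2) ^ 2 + (a - 1) * ((1 - a - δ) / 2) = b ∧
    ((1 - a + δ) / 2) ^ 2 + (a - 1) * ((1 - a + δ) / 2) = b ∧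
    (1 - a - δ) / 2 < 0 ∧ 0 < (1 - a + δ) / 2 := by
  have hδ2 : δ ^ 2 = (1 - a) ^ 2 + 4 * b := by rw [hδ]; exact sq_sqrt (by positivity)
  have hδ0 : 0 ≤ δ := hδ ▸ sqrt_nonneg _
  have hlt : |1 - a| < δ := abs_lt_of_sq_lt_sq (by linarith) hδ0
  refine ⟨by linear_combination hδ2 / 4, by linear_combination hδ2 / 4, ?_, ?_⟩ <;>
    linarith [abs_lt.1 hlt]

section
variable {a c fi fi0 t0 : ℝ}

lemma rpow_sub_inv_pos_of_data (hc : 1 < c) (hfi0 : 0 < fi0) (ht0 : 0 < t0)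
    (hdata : fi0 > (1 - a) * (1 + fi) / ((1 - c) * t0)) :
    0 < t0 ^ (1 - a) - ((1 - c) * fi0 * t0 ^ a / ((1 - a) * (1 + fi)))⁻¹ := by
  have hct : (1 - c) * t0 < 0 := mul_neg_of_neg_of_pos (by linarith) ht0
  have hdata' : fi0 * ((1 - c) * t0) < (1 - a) * (1 + fi) := (div_lt_iff_of_neg hct).1 hdata
  have hta : t0 ^ (1 - a) * t0 ^ a = t0 := by rw [← rpow_add ht0]; norm_num
  have htpos : 0 < t0 ^ a := rpow_pos_of_pos ht0 a
  have hden : (1 - c) * fi0 * t0 ^ a < 0 :=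
    mul_neg_of_neg_of_pos (mul_neg_of_neg_of_pos (by linarith) hfi0) htpos
  rw [inv_div, sub_pos, div_lt_iff_of_neg hden]
  nlinarith

lemma rpow_sub_inv_lt_rpow {t : ℝ} (ha : 1 < a) (hc : 1 < c) (hc2 : c < 2) (hfi : 0 < fi)
    (hfi0 : 0 < fi0) (ht0 : 0 < t0)
    (h : -1 - -(fi / (1 + fi)) ≤
      t0 ^ a * -(fi0 / (1 + fi) ^ 2) * (t ^ (1 - a) - t0 ^ (1 - a)) / (1 - a)) :
    t0 ^ (1 - a) - ((1 - c) * fi0 * t0 ^ a / ((1 - a) * (1 + fi)))⁻¹ < t ^ (1 - a) := by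
  set u := t ^ (1 - a) - t0 ^ (1 - a)
  have htpos : 0 < t0 ^ a := rpow_pos_of_pos ht0 a
  have hlow : (1 - a) * (1 + fi) ≤ t0 ^ a * fi0 * u := by
    have e1 : -1 - -(fi / (1 + fi)) = -1 / (1 + fi) := by field_simp; ring
    have e2 : t0 ^ a * -(fi0 / (1 + fi) ^ 2) * u / (1 - a)
        = t0 ^ a * fi0 * u / ((1 + fi) ^ 2 * (a - 1)) := by
      field_simp [show (1 - a) ≠ 0 by linarith, show (a - 1) ≠ 0 by linarith]; ring
    have : 0 < (1 + fi) ^ 2 * (a - 1) := mul_pos (by positivity) (by linarith)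
    rw [e1, e2, div_le_div_iff₀ (by linarith) this] at h
    nlinarith
  have hden : (1 - c) * fi0 * t0 ^ a < 0 :=
    mul_neg_of_neg_of_pos (mul_neg_of_neg_of_pos (by linarith) hfi0) htpos
  have hN : (1 - a) * (1 + fi) < 0 := mul_neg_of_neg_of_pos (by linarith) (by linarith)
  rw [inv_div, sub_lt_comm, lt_div_iff_of_neg hden]
  nlinarith

end

theorem stmt_10_general
    (t0 a b c fi fi0 abar cbar delta AA BB EE tstar : ℝ)
    (ht0 : 0 < t0)
    (ha : 1 < a) (hb : 0 < b) (hc : 1 < c) (hc' : c < 3 / 2)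
    (hfi : 0 < fi) (hfi0 : 0 < fi0)
    (habar : abar = 1 - a) (hcbar : cbar = 1 - c)
    (hdelta : delta = Real.sqrt ((1 - a) ^ 2 + 4 * b))
    (hAA : AA = t0 ^ (-((abar - delta) / 2)) / delta *
      (t0 * fi0 / (1 + fi) ^ 2 - (abar + delta) / 2 * (fi / (1 + fi))))
    (hBB : BB = t0 ^ (-((abar + delta) / 2)) / delta *
      ((abar - delta) / 2 * (fi / (1 + fi)) - t0 * fi0 / (1 + fi) ^ 2))
    (hEE : EE = cbar * fi0 * t0 ^ (1 - abar) / (abar * (1 + fi)))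
    (htstar : IsLeast {t : ℝ | t0 < t ∧
      AA * t ^ ((abar - delta) / 2) + BB * t ^ ((abar + delta) / 2) + 1 = 0} tstar)
    (hdata : fi0 > abar * (1 + fi) / (cbar * t0)) :
    0 < t0 ^ abar - EE⁻¹ ∧
    t0 < tstar ∧
    tstar < (t0 ^ abar - EE⁻¹) ^ (1 / abar) := by
  subst habar hcbar hEE
  rw [sub_sub_cancel]
  obtain ⟨⟨ht0s, hroot⟩, -⟩ := htstar
  obtain ⟨hp, hq, hp0, hq0⟩ := indicial_roots hb hdelta
  set p := (1 - a - delta) / 2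
  set q := (1 - a + delta) / 2
  have hqp : q - p = delta := by ring
  have hA : AA = t0 ^ (-p) / (q - p) * (q * -(fi / (1 + fi)) - t0 * -(fi0 / (1 + fi) ^ 2)) := by
    rw [hAA, hqp]; ring
  have hB : BB = t0 ^ (-q) / (q - p) * (t0 * -(fi0 / (1 + fi) ^ 2) - p * -(fi / (1 + fi))) := by
    rw [hBB, hqp]; ring
  obtain ⟨hF0, hF'0⟩ := eulerSol_initial ht0 (hp0.trans hq0).ne hA hB
  have hcmp := sub_le_of_euler_eq ht0 ha.ne' hb.le
    (fun x hx => hasDerivAt_eulerSol (ht0.trans_le hx))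
    (fun x hx => hasDerivAt_eulerSol (ht0.trans_le hx))
    (fun x hx => eulerSol_euler_eq hp hq (ht0.trans hx))
    (fun x hx => eulerSol_nonpos_of_initial ht0 hp0 hq0 (neg_nonpos.2 (by positivity))
      (neg_neg_of_pos (by positivity)) hA hB hx.le) ht0s.le
  rw [show eulerSol AA BB p q tstar = -1 by unfold eulerSol; linarith, hF0, hF'0] at hcmp
  have hpos := rpow_sub_inv_pos_of_data hc hfi0 ht0 hdata
  refine ⟨hpos, ht0s, ?_⟩
  rw [one_div, lt_rpow_inv_iff_of_neg (ht0.trans ht0s) hpos (by linarith)]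
  exact rpow_sub_inv_lt_rpow ha hc (by linarith) hfi hfi0 ht0 hcmp

/-- Assume the data condition `f̊0 > ā(1+f̊)/(c̄ t0)` (equivalently
`t0^ā > 𝙴⁻¹`), and assume there is a `C²` solution of the ODE on a maximal interval
`[t0,t_m)` with `t_m ≥ t_star`. Then `t^star = (t0^ā − 𝙴⁻¹)^(1/ā)` is well defined
(`t0^ā − 𝙴⁻¹ > 0`), finite, and `t0 < t_star < t^star < ∞`. -/
theorem stmt_10
    (t0 a b c fi fi0 abar cbar delta AA BB EE tstar : ℝ)
    (ht0 : 0 < t0)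
    (ha : 1 < a) (hb : 0 < b) (hc : 1 < c) (hc' : c < 3 / 2)
    (hfi : 0 < fi) (hfi0 : 0 < fi0)
    (habar : abar = 1 - a) (hcbar : cbar = 1 - c)
    (hdelta : delta = Real.sqrt ((1 - a) ^ 2 + 4 * b))
    (hAA : AA = t0 ^ (-((abar - delta) / 2)) / delta *
      (t0 * fi0 / (1 + fi) ^ 2 - (abar + delta) / 2 * (fi / (1 + fi))))
    (hBB : BB = t0 ^ (-((abar + delta) / 2)) / delta *
      ((abar - delta) / 2 * (fi / (1 + fi)) - t0 * fi0 / (1 + fi) ^ 2))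
    (hEE : EE = cbar * fi0 * t0 ^ (1 - abar) / (abar * (1 + fi)))
    (htstar : IsLeast {t : ℝ | t0 < t ∧
      AA * t ^ ((abar - delta) / 2) + BB * t ^ ((abar + delta) / 2) + 1 = 0} tstar)
    (hdata : fi0 > abar * (1 + fi) / (cbar * t0))
    (hsol : ∃ (f : ℝ → ℝ) (tm : EReal),
      IsMaxSol t0 a b c fi fi0 f tm ∧ (tstar : EReal) ≤ tm) :
    0 < t0 ^ abar - EE⁻¹ ∧
    t0 < tstar ∧
    tstar < (t0 ^ abar - EE⁻¹) ^ (1 / abar) :=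
  stmt_10_general t0 a b c fi fi0 abar cbar delta AA BB EE tstar ht0 ha hb hc hc' hfi hfi0 habar
    hcbar hdelta hAA hBB hEE htstar hdata
end
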